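/- arXiv:2402.14470 — 6 statements merged into one kernel-verified Lean document; each statement's English description precedes it below -/
import Mathlib

section
/- Let Ξ(s) = Σ_{j≥0} F_∞(j) s^j and G_N(s) = Σ_{j≥-D} f_N(j) s^j. Then for all complex s with |s| < 1 and s ≠ 0, Ξ(s)(s^D G_N(s) - s^D) = Σ_{j=0}^{D-1} F_∞(j) Σ_{x=j}^{D-1} f_N(x-D-j) s^x, provided M ≤ 0. -/
/-!
Put `a n = F n` and `b k = f (k - D)`, so that `Ξ(s) = ∑ aₙ sⁿ` and `s^D G_N(s) = ∑ bₖ sᵏ`.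
For `n ≥ 0 ≥ M` the recurrence reads `(a ⋆ b)(n + D) = a n` for the Cauchy product `a ⋆ b`.
Hence the series `Ξ(s) · s^D G_N(s) = ∑ (a ⋆ b)(n) sⁿ` is `Ξ(s) s^D` plus its first `D` terms,
and exchanging the two finite sums in those terms gives the right-hand side.
-/

open Finset PowerSeries

lemma Int.sum_Icc_zero_natCast {M : Type*} [AddCommMonoid M] (m : ℕ) (g : ℤ → M) :
    ∑ j ∈ Icc (0 : ℤ) m, g j = ∑ k ∈ Finset.range (m + 1), g k := by
  rw [Int.Icc_eq_finset_map, sum_map]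
  simp

section Coefficients

variable {R : Type*} [Semiring R]

lemma PowerSeries.coeff_mk_mul_mk (a b : ℕ → R) (n : ℕ) :
    coeff n (mk a * mk b) = ∑ k ∈ range (n + 1), a k * b (n - k) := by
  rw [coeff_mul, Nat.sum_antidiagonal_eq_sum_range_succ fun i j => coeff i (mk a) * coeff j (mk b)]
  simp only [coeff_mk]

lemma PowerSeries.sum_range_coeff_mk_mul_mk_mul_pow (a b : ℕ → R) (s : R) (D : ℕ) :
    ∑ n ∈ range D, coeff n (mk a * mk b) * s ^ n =
      ∑ j ∈ range D, a j * ∑ x ∈ Icc j (D - 1), b (x - j) * s ^ x := by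
  simp only [coeff_mk_mul_mk, sum_mul, mul_sum]
  rw [sum_comm' (t' := range D) (s' := fun k => Icc k (D - 1))]
  · simp only [mul_assoc]
  · intro n k
    simp only [mem_range, mem_Icc]
    omega

end Coefficients

section Summability

variable {R : Type*} [NormedRing R] [NormOneClass R]

lemma summable_norm_mul_pow_of_norm_le {a : ℕ → R} {s : R} {C : ℝ} (ha : ∀ n, ‖a n‖ ≤ C)
    (hs : ‖s‖ < 1) : Summable fun n => ‖a n * s ^ n‖ := by
  refine .of_nonneg_of_le (fun _ => norm_nonneg _) (fun n => ?_)
    ((summable_geometric_of_lt_one (norm_nonneg s) hs).mul_left C)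
  calc ‖a n * s ^ n‖ ≤ ‖a n‖ * ‖s‖ ^ n := (norm_mul_le _ _).trans (by gcongr; exact norm_pow_le _ _)
    _ ≤ C * ‖s‖ ^ n := by gcongr; exact ha n

lemma summable_norm_mul_pow_of_summable_norm {a : ℕ → R} {s : R} (ha : Summable fun n => ‖a n‖)
    (hs : ‖s‖ ≤ 1) : Summable fun n => ‖a n * s ^ n‖ := by
  refine .of_nonneg_of_le (fun _ => norm_nonneg _) (fun n => ?_) ha
  calc ‖a n * s ^ n‖ ≤ ‖a n‖ * ‖s‖ ^ n := (norm_mul_le _ _).trans (by gcongr; exact norm_pow_le _ _)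
    _ ≤ ‖a n‖ * 1 := by gcongr; exact pow_le_one₀ (norm_nonneg s) hs
    _ = ‖a n‖ := mul_one _

end Summability

section CauchyProduct

variable {R : Type*} [NormedCommRing R] [CompleteSpace R]

lemma tsum_mul_tsum_eq_tsum_coeff_mul_pow {a b : ℕ → R} {s : R}
    (ha : Summable fun n => ‖a n * s ^ n‖) (hb : Summable fun n => ‖b n * s ^ n‖) :
    (∑' n, a n * s ^ n) * (∑' n, b n * s ^ n) = ∑' n, coeff n (mk a * mk b) * s ^ n := by
  rw [tsum_mul_tsum_eq_tsum_sum_antidiagonal_of_summable_norm ha hb]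
  refine tsum_congr fun n => ?_
  rw [coeff_mul, sum_mul]
  refine sum_congr rfl fun p hp => ?_
  rw [← mem_antidiagonal.mp hp, pow_add, coeff_mk, coeff_mk]
  ring

lemma tsum_mul_sub_pow_eq_sum_range_of_coeff_add {a b : ℕ → R} {s : R} {D : ℕ}
    (ha : Summable fun n => ‖a n * s ^ n‖) (hb : Summable fun n => ‖b n * s ^ n‖)
    (hshift : ∀ n, coeff (n + D) (mk a * mk b) = a n) :
    (∑' n, a n * s ^ n) * ((∑' n, b n * s ^ n) - s ^ D) =
      ∑ n ∈ range D, coeff n (mk a * mk b) * s ^ n := by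
  have htail : ∀ n, coeff (n + D) (mk a * mk b) * s ^ (n + D) = a n * s ^ n * s ^ D := by
    intro n
    rw [hshift, pow_add, mul_assoc]
  have hsummable : Summable fun n => coeff n (mk a * mk b) * s ^ n := by
    rw [← summable_nat_add_iff D]
    simpa only [htail] using ha.of_norm.mul_right (s ^ D)
  rw [mul_sub, tsum_mul_tsum_eq_tsum_coeff_mul_pow ha hb, ← hsummable.sum_add_tsum_nat_add D]
  simp only [htail]
  rw [ha.of_norm.tsum_mul_right (s ^ D)]
  ring

end CauchyProduct

theorem generating_function_identity_general (D : ℕ) (M : ℤ) (hM : M ≤ 0)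
    (f : ℤ → ℝ)
    (hfsum : HasSum (fun k : ℕ => f ((k : ℤ) - D)) 1)
    (F : ℤ → ℝ) (hF01 : ∀ x, 0 ≤ F x ∧ F x ≤ 1)
    (hFrec : ∀ x : ℤ, M ≤ x →
      F x = ∑ j ∈ Finset.Icc (0 : ℤ) (x + D), f (x - j) * F j) :
    ∀ s : ℂ, ‖s‖ < 1 → s ≠ 0 →
      (∑' j : ℕ, (F j : ℂ) * s ^ j) *
        ((∑' k : ℕ, (f ((k : ℤ) - D) : ℂ) * s ^ k) - s ^ D) =
      ∑ j ∈ Finset.range D, (F j : ℂ) *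
        ∑ x ∈ Finset.Icc j (D - 1), (f ((x : ℤ) - D - j) : ℂ) * s ^ x := by
  intro s hs _
  set a : ℕ → ℂ := fun n => (F n : ℂ)
  set b : ℕ → ℂ := fun k => (f ((k : ℤ) - D) : ℂ)
  have ha : Summable fun n => ‖a n * s ^ n‖ := by
    refine summable_norm_mul_pow_of_norm_le (C := 1) (fun n => ?_) hs
    simpa [a, abs_le] using ⟨by linarith [(hF01 n).1], (hF01 n).2⟩
  have hb : Summable fun n => ‖b n * s ^ n‖ :=
    summable_norm_mul_pow_of_summable_norm (by simpa [b] using hfsum.summable.abs) hs.le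
  have hshift : ∀ n, coeff (n + D) (mk a * mk b) = a n := by
    intro n
    have hrec := congrArg (fun r : ℝ => (r : ℂ)) (hFrec n (hM.trans n.cast_nonneg))
    rw [show (n : ℤ) + D = ((n + D : ℕ) : ℤ) by push_cast; ring, Int.sum_Icc_zero_natCast] at hrec
    simp only [coeff_mk_mul_mk, a, b, hrec]
    push_cast
    refine sum_congr rfl fun k hk => ?_
    rw [Nat.cast_sub (Nat.lt_succ_iff.mp (mem_range.mp hk)), Nat.cast_add, sub_right_comm,
      add_sub_cancel_right, mul_comm]
  rw [tsum_mul_sub_pow_eq_sum_range_of_coeff_add ha hb hshift, sum_range_coeff_mk_mul_mk_mul_pow]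
  refine sum_congr rfl fun j _ => congrArg _ (sum_congr rfl fun x hx => ?_)
  simp only [b, Nat.cast_sub (mem_Icc.mp hx).1, sub_right_comm]

/-- Generating-function identity (case `M ≤ 0`): if `F = F_∞` satisfies the renewal
recurrence with kernel `f = f_N` supported on `{-D, -D+1, …}`, then for `|s| < 1`, `s ≠ 0`,
`Ξ(s)(s^D G_N(s) - s^D) = ∑_{j=0}^{D-1} F(j) ∑_{x=j}^{D-1} f(x-D-j) s^x`,
where `Ξ(s) = ∑_{j≥0} F(j) s^j` and `s^D G_N(s) = ∑_{k≥0} f(k-D) s^k`. -/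
theorem generating_function_identity (D : ℕ) (hD : 1 ≤ D) (M : ℤ) (hM : M ≤ 0)
    (f : ℤ → ℝ) (hf0 : ∀ j, 0 ≤ f j)
    (hfsupp : ∀ j : ℤ, j < -(D : ℤ) → f j = 0)
    (hfD : 0 < f (-(D : ℤ)))
    (hfsum : HasSum (fun k : ℕ => f ((k : ℤ) - D)) 1)
    (F : ℤ → ℝ) (hF01 : ∀ x, 0 ≤ F x ∧ F x ≤ 1)
    (hFzero : ∀ x : ℤ, x < M → F x = 0)
    (hFrec : ∀ x : ℤ, M ≤ x →
      F x = ∑ j ∈ Finset.Icc (0 : ℤ) (x + D), f (x - j) * F j) :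
    ∀ s : ℂ, ‖s‖ < 1 → s ≠ 0 →
      (∑' j : ℕ, (F j : ℂ) * s ^ j) *
        ((∑' k : ℕ, (f ((k : ℤ) - D) : ℂ) * s ^ k) - s ^ D) =
      ∑ j ∈ Finset.range D, (F j : ℂ) *
        ∑ x ∈ Finset.Icc j (D - 1), (f ((x : ℤ) - D - j) : ℂ) * s ^ x :=
  generating_function_identity_general D M hM f hfsum F hF01 hFrec
end

section
/- If G is the probability generating function of an integer-valued random variable S with P(S ≥ -D) = 1, P(S = -D) > 0, and E[S] < 0, then differentiating the identity G_ξ(s)(s^D G(s) - s^D) = (1-s) Σ_{j=0}^{D-1} F_∞(j) Σ_{x=j}^{D-1} f(x-D-j) s^x at s = 1 (with G_ξ(1) = 1) yields Σ_{j=0}^{D-1} F_∞(j) F(-j-1) = -E[S], where F(k) = P(S ≤ k) and f(k) = P(S = k). -/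
open MeasureTheory Filter Topology

/-! Write `a k = P(S = k - D)`. Since `1 - s^k = (1 - s)(1 + ⋯ + s^(k-1))`, the factor
`∑ a k s^k - s^D` equals `(1 - s)(∑_{i<D} s^i - ∑ a k (1 + ⋯ + s^(k-1)))`, so after cancelling
`1 - s` the identity holds between functions that have limits as `s → 1⁻`: Abel's theorem sends
the `G_ξ` factor to `1`, dominated convergence (dominated by `k a k`) sends the bracket to
`D - E[S + D] = -E[S]`, and the right-hand side is a polynomial whose value at `1` is
`∑_j F_∞(j) P(S ≤ -j - 1)` because `S ≥ -D` almost surely. -/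

theorem hasSum_measureReal_singleton_smul {X E : Type*} [MeasurableSpace X] [Countable X]
    [MeasurableSingletonClass X] [NormedAddCommGroup E] [NormedSpace ℝ E] [CompleteSpace E]
    {μ : Measure X} {f : X → E} (hf : Integrable f μ) :
    HasSum (fun x => μ.real {x} • f x) (∫ x, f x ∂μ) := by
  rw [← Measure.sum_smul_dirac μ] at hf
  have h := hasSum_integral_measure hf
  simp only [integral_smul_measure, integral_dirac, Measure.sum_smul_dirac] at h
  exact h

theorem hasSum_natCast_sub_iff {M : Type*} [AddCommMonoid M] [TopologicalSpace M]
    {f : ℤ → M} {a : M} (n : ℕ) (hf : ∀ z < -(n : ℤ), f z = 0) :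
    HasSum (fun k : ℕ => f (k - n)) a ↔ HasSum f a := by
  refine (Function.Injective.hasSum_iff (f := f) (g := fun k : ℕ => (k : ℤ) - n)
    (fun k l h => by simpa using h) fun z hz => hf z ?_)
  by_contra! h
  exact hz ⟨(z + n).toNat, show ((z + n).toNat : ℤ) - n = z by omega⟩

theorem hasSum_measureReal_preimage_singleton_smul {Ω X E : Type*} [MeasurableSpace Ω]
    [MeasurableSpace X] [Countable X] [MeasurableSingletonClass X] [NormedAddCommGroup E]
    [NormedSpace ℝ E] [CompleteSpace E] {μ : Measure Ω} {S : Ω → X} (hS : Measurable S)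
    {f : X → E} (hf : Integrable (fun ω => f (S ω)) μ) :
    HasSum (fun x => μ.real (S ⁻¹' {x}) • f x) (∫ ω, f (S ω) ∂μ) := by
  have hfS : Integrable f (μ.map S) :=
    (integrable_map_measure StronglyMeasurable.of_discrete.aestronglyMeasurable
      hS.aemeasurable).2 hf
  have h := hasSum_measureReal_singleton_smul hfS
  simp only [map_measureReal_apply hS (measurableSet_singleton _)] at h
  rwa [integral_map hS.aemeasurable StronglyMeasurable.of_discrete.aestronglyMeasurable] at h

section LowerBounded

variable {Ω : Type*} [MeasurableSpace Ω] {μ : Measure Ω} {S : Ω → ℤ} {D : ℕ}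

theorem measureReal_eq_zero_of_lt_of_ae_le (hlb : ∀ᵐ ω ∂μ, -(D : ℤ) ≤ S ω) {z : ℤ}
    (hz : z < -(D : ℤ)) : μ.real {ω | S ω = z} = 0 := by
  have hnull : μ {ω | S ω = z} = 0 := measure_mono_null (fun ω hω => by
    simp only [Set.mem_ofPred_eq] at hω ⊢
    omega) (ae_iff.1 hlb)
  simp [Measure.real, hnull]

theorem hasSum_measureReal_eq_natCast_sub [IsProbabilityMeasure μ] (hS : Measurable S)
    (hlb : ∀ᵐ ω ∂μ, -(D : ℤ) ≤ S ω) :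
    HasSum (fun k : ℕ => μ.real {ω | S ω = k - D}) 1 := by
  have h := hasSum_measureReal_preimage_singleton_smul hS (f := fun _ => (1 : ℝ))
    (integrable_const (μ := μ) 1)
  simp only [smul_eq_mul, mul_one, integral_const, probReal_univ] at h
  exact (hasSum_natCast_sub_iff D fun z hz => measureReal_eq_zero_of_lt_of_ae_le hlb hz).2 h

theorem hasSum_natCast_mul_measureReal_eq_natCast_sub [IsProbabilityMeasure μ]
    (hS : Measurable S) (hlb : ∀ᵐ ω ∂μ, -(D : ℤ) ≤ S ω)
    (hint : Integrable (fun ω => (S ω : ℝ)) μ) :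
    HasSum (fun k : ℕ => k * μ.real {ω | S ω = k - D}) ((∫ ω, (S ω : ℝ) ∂μ) + D) := by
  have h := hasSum_measureReal_preimage_singleton_smul hS (f := fun z => (z : ℝ) + D)
    (hint.add (integrable_const _))
  rw [integral_add hint (integrable_const _), integral_const, probReal_univ, one_smul] at h
  rw [← hasSum_natCast_sub_iff D fun z hz => by
    simp [Set.preimage, measureReal_eq_zero_of_lt_of_ae_le hlb hz]] at h
  refine h.congr_fun fun k => ?_
  push_cast
  rw [smul_eq_mul, sub_add_cancel, mul_comm]
  rfl

theorem measureReal_le_eq_sum_Icc [IsFiniteMeasure μ] (hS : Measurable S)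
    (hlb : ∀ᵐ ω ∂μ, -(D : ℤ) ≤ S ω) {j : ℕ} (hj : j < D) :
    μ.real {ω | S ω ≤ -(j : ℤ) - 1} =
      ∑ x ∈ Finset.Icc j (D - 1), μ.real {ω | S ω = (x : ℤ) - D - j} := by
  have hae : {ω | S ω ≤ -(j : ℤ) - 1} =ᵐ[μ] S ⁻¹' ↑(Finset.Icc (-(D : ℤ)) (-j - 1)) := by
    filter_upwards [hlb] with ω hω
    show (S ω ≤ -(j : ℤ) - 1) = (S ω ∈ Finset.Icc (-(D : ℤ)) (-j - 1))
    simp only [Finset.mem_Icc, eq_iff_iff]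
    omega
  rw [measureReal_congr hae, ← sum_measureReal_preimage_singleton _
    fun z _ => hS (measurableSet_singleton z)]
  refine Finset.sum_nbij' (fun z => (z + D + j).toNat) (fun x => (x : ℤ) - D - j)
    ?_ ?_ ?_ ?_ ?_ <;> intro a ha <;> simp only [Finset.mem_Icc] at ha ⊢
  any_goals omega
  rw [Int.toNat_of_nonneg (by omega), show a + D + j - D - j = a by ring]
  rfl

end LowerBounded

section GeneratingFunction

variable {a : ℕ → ℝ} {s : ℝ}

theorem geom_sum_le_card (hs0 : 0 ≤ s) (hs1 : s ≤ 1) (k : ℕ) :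
    ∑ i ∈ Finset.range k, s ^ i ≤ k := by
  simpa using Finset.sum_le_card_nsmul (Finset.range k) _ 1
    fun i _ => pow_le_one₀ hs0 hs1

theorem mul_geom_sum_le (ha0 : ∀ k, 0 ≤ a k) (hs0 : 0 ≤ s) (hs1 : s ≤ 1) (k : ℕ) :
    a k * ∑ i ∈ Finset.range k, s ^ i ≤ k * a k := by
  rw [mul_comm (k : ℝ)]
  exact mul_le_mul_of_nonneg_left (geom_sum_le_card hs0 hs1 k) (ha0 k)

theorem tsum_mul_pow_sub_pow_eq (ha0 : ∀ k, 0 ≤ a k) (ha : HasSum a 1)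
    (hka : Summable fun k : ℕ => k * a k) (hs0 : 0 ≤ s) (hs1 : s ≤ 1) (D : ℕ) :
    ∑' k, a k * s ^ k - s ^ D =
      (1 - s) * (∑ i ∈ Finset.range D, s ^ i - ∑' k, a k * ∑ i ∈ Finset.range k, s ^ i) := by
  have hg : Summable fun k => a k * ∑ i ∈ Finset.range k, s ^ i :=
    hka.of_nonneg_of_le (fun k => mul_nonneg (ha0 k) (Finset.sum_nonneg fun i _ => by positivity))
      (mul_geom_sum_le ha0 hs0 hs1)
  have hterm : ∀ k, a k * s ^ k = a k - (1 - s) * (a k * ∑ i ∈ Finset.range k, s ^ i) :=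
    fun k => by linear_combination -(a k) * geom_sum_mul s k
  rw [tsum_congr hterm, ha.summable.tsum_sub (hg.mul_left _), tsum_mul_left, ha.tsum_eq]
  linear_combination geom_sum_mul s D

theorem tendsto_tsum_mul_geom_sum_nhdsLT_one (ha0 : ∀ k, 0 ≤ a k) {m : ℝ}
    (hm : HasSum (fun k : ℕ => k * a k) m) :
    Tendsto (fun s => ∑' k, a k * ∑ i ∈ Finset.range k, s ^ i) (𝓝[<] 1) (𝓝 m) := by
  rw [← hm.tsum_eq]
  refine tendsto_tsum_of_dominated_convergence hm.summable (fun k => ?_) ?_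
  · have h : Continuous fun s : ℝ => a k * ∑ i ∈ Finset.range k, s ^ i := by fun_prop
    simpa [mul_comm] using (h.tendsto 1).mono_left nhdsWithin_le_nhds
  · filter_upwards [Ioo_mem_nhdsLT zero_lt_one] with s hs k
    rw [Real.norm_of_nonneg (mul_nonneg (ha0 k) (Finset.sum_nonneg fun i _ =>
      pow_nonneg hs.1.le i))]
    exact mul_geom_sum_le ha0 hs.1.le hs.2.le k

theorem eq_natCast_sub_of_mul_tsum_mul_pow_sub_pow_eq (ha0 : ∀ k, 0 ≤ a k) (ha : HasSum a 1)
    {m : ℝ} (hm : HasSum (fun k : ℕ => k * a k) m) {p : ℕ → ℝ} (hp : HasSum p 1)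
    {Q : ℝ → ℝ} (hQ : ContinuousAt Q 1) (D : ℕ)
    (hident : ∀ s ∈ Set.Ioo (0 : ℝ) 1,
      (∑' j, p j * s ^ j) * (∑' k, a k * s ^ k - s ^ D) = (1 - s) * Q s) :
    Q 1 = D - m := by
  have hp_lim : Tendsto (fun s => ∑' j, p j * s ^ j) (𝓝[<] 1) (𝓝 1) :=
    Real.tendsto_tsum_powerSeries_nhdsWithin_lt hp.tendsto_sum_nat
  have hD_lim : Tendsto (fun s : ℝ => ∑ i ∈ Finset.range D, s ^ i) (𝓝[<] 1) (𝓝 D) := by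
    have h : Continuous fun s : ℝ => ∑ i ∈ Finset.range D, s ^ i := by fun_prop
    simpa using (h.tendsto 1).mono_left nhdsWithin_le_nhds
  have hQ_eq : (fun s => (∑' j, p j * s ^ j) *
      (∑ i ∈ Finset.range D, s ^ i - ∑' k, a k * ∑ i ∈ Finset.range k, s ^ i)) =ᶠ[𝓝[<] 1] Q := by
    filter_upwards [Ioo_mem_nhdsLT zero_lt_one] with s hs
    refine mul_left_cancel₀ (sub_ne_zero.2 hs.2.ne') ?_
    rw [← hident s hs, tsum_mul_pow_sub_pow_eq ha0 ha hm.summable hs.1.le hs.2.le]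
    ring
  have hQ_lim :=
    (hp_lim.mul (hD_lim.sub (tendsto_tsum_mul_geom_sum_nhdsLT_one ha0 hm))).congr' hQ_eq
  simpa using tendsto_nhds_unique (hQ.tendsto.mono_left nhdsWithin_le_nhds) hQ_lim

end GeneratingFunction

theorem key_equation_general {Ω : Type*} [MeasurableSpace Ω] (μ : Measure Ω) [IsProbabilityMeasure μ]
    (S : Ω → ℤ) (hSmeas : Measurable S)
    (D : ℕ)
    (hlb : ∀ᵐ ω ∂μ, -(D : ℤ) ≤ S ω)
    (hint : Integrable (fun ω => (S ω : ℝ)) μ)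
    (p : ℕ → ℝ) (hpsum : HasSum p 1)
    (c : ℕ → ℝ)
    (hident : ∀ s : ℝ, s ∈ Set.Ioo (0 : ℝ) 1 →
      (∑' j : ℕ, p j * s ^ j) *
          ((∑' k : ℕ, (μ {ω | S ω = (k : ℤ) - D}).toReal * s ^ k) - s ^ D) =
        (1 - s) * ∑ j ∈ Finset.range D, c j *
          ∑ x ∈ Finset.Icc j (D - 1),
            (μ {ω | S ω = (x : ℤ) - D - j}).toReal * s ^ x) :
    ∑ j ∈ Finset.range D, c j * (μ {ω | S ω ≤ -(j : ℤ) - 1}).toReal =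
      -∫ ω, (S ω : ℝ) ∂μ := by
  have hQ := eq_natCast_sub_of_mul_tsum_mul_pow_sub_pow_eq (fun _ => measureReal_nonneg)
    (hasSum_measureReal_eq_natCast_sub hSmeas hlb)
    (hasSum_natCast_mul_measureReal_eq_natCast_sub hSmeas hlb hint) hpsum
    (by fun_prop) D hident
  simp only [one_pow, mul_one] at hQ
  calc ∑ j ∈ Finset.range D, c j * (μ {ω | S ω ≤ -(j : ℤ) - 1}).toReal
      = ∑ j ∈ Finset.range D, c j *
          ∑ x ∈ Finset.Icc j (D - 1), (μ {ω | S ω = (x : ℤ) - D - j}).toReal :=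
        Finset.sum_congr rfl fun j hj => by
          rw [← measureReal_def, measureReal_le_eq_sum_Icc hSmeas hlb (Finset.mem_range.1 hj)]
          rfl
    _ = -∫ ω, (S ω : ℝ) ∂μ := by rw [hQ]; ring

/-- Differentiating the identity `G_ξ(s)(s^D G(s) - s^D) = (1-s)·∑_j F_∞(j) ∑_x f(x-D-j)s^x`
at `s = 1` (with `G_ξ(1) = 1`) yields `∑_{j=0}^{D-1} F_∞(j) F(-j-1) = -E[S]`, where
`F(k) = P(S ≤ k)`, `f(k) = P(S = k)`, `S ≥ -D` a.s. with `P(S = -D) > 0` and `E[S] < 0`. -/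
theorem key_equation {Ω : Type*} [MeasurableSpace Ω] (μ : Measure Ω) [IsProbabilityMeasure μ]
    (S : Ω → ℤ) (hSmeas : Measurable S)
    (D : ℕ) (hD : 1 ≤ D)
    (hlb : ∀ᵐ ω ∂μ, -(D : ℤ) ≤ S ω)
    (hatom : 0 < μ {ω | S ω = -(D : ℤ)})
    (hint : Integrable (fun ω => (S ω : ℝ)) μ)
    (hmean : ∫ ω, (S ω : ℝ) ∂μ < 0)
    (p : ℕ → ℝ) (hp0 : ∀ k, 0 ≤ p k) (hpsum : HasSum p 1)
    (c : ℕ → ℝ) (hc : ∀ j, 0 ≤ c j ∧ c j ≤ 1)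
    (hident : ∀ s : ℝ, s ∈ Set.Ioo (0 : ℝ) 1 →
      (∑' j : ℕ, p j * s ^ j) *
          ((∑' k : ℕ, (μ {ω | S ω = (k : ℤ) - D}).toReal * s ^ k) - s ^ D) =
        (1 - s) * ∑ j ∈ Finset.range D, c j *
          ∑ x ∈ Finset.Icc j (D - 1),
            (μ {ω | S ω = (x : ℤ) - D - j}).toReal * s ^ x) :
    ∑ j ∈ Finset.range D, c j * (μ {ω | S ω ≤ -(j : ℤ) - 1}).toReal =
      -∫ ω, (S ω : ℝ) ∂μ :=
  key_equation_general μ S hSmeas D hlb hint p hpsum c hident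
end

section
/- Under the assumptions of the main theorem with M ≤ 0 and E[S_N] < 0, and assuming the roots α_1, ..., α_{D-1} of G_N(s) = 1 in {|s| ≤ 1, s ≠ 1} are simple, the initial value F_∞(0) is given by F_∞(0) = (-E[S_N]/f_N(-D)) · Π_{j=1}^{D-1} α_j/(α_j - 1). -/
/-!
Let `Q(s) = ∑_j v_j ∑_{x=j}^{D-1} f_N(x-D-j) s^x`. The first `D - 1` rows of the system say that
`Q` vanishes at the distinct roots `α_1, …, α_{D-1}`, and `Q` has degree at most `D - 1`, so
`Q = c ∏_j (X - α_j)`. Evaluating at `0` and at `1` gives `Q(0) = v_0 f_N(-D) = c ∏_j (-α_j)` and,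
by the last row, `Q(1) = -E[S_N] = c ∏_j (1 - α_j)`; dividing eliminates `c`.
-/

open Polynomial Finset

namespace Polynomial

variable {F ι : Type*} [Field F] [Fintype ι] {v : ι → F} {p : F[X]}

theorem eq_C_coeff_mul_nodal_of_eval_eq_zero (hv : Function.Injective v)
    (hp : p.natDegree ≤ Fintype.card ι) (hroot : ∀ i, p.eval (v i) = 0) :
    p = C (p.coeff (Fintype.card ι)) * Lagrange.nodal univ v := by
  refine eq_of_degree_sub_lt_of_eval_index_eq univ hv.injOn ?_ fun i _ => ?_
  · rw [degree_lt_iff_coeff_zero]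
    intro m hm
    rw [card_univ] at hm
    rcases hm.lt_or_eq with hlt | rfl
    · have hnodal : (Lagrange.nodal univ v).natDegree = Fintype.card ι := by
        rw [Lagrange.natDegree_nodal, card_univ]
      rw [coeff_sub, coeff_C_mul, coeff_eq_zero_of_natDegree_lt (hp.trans_lt hlt),
        coeff_eq_zero_of_natDegree_lt (hnodal.trans_lt hlt), mul_zero, sub_zero]
    · have hmonic : (Lagrange.nodal univ v).coeff (Fintype.card ι) = 1 := by
        simpa [Lagrange.natDegree_nodal] using
          (Lagrange.nodal_monic (s := univ) (v := v)).coeff_natDegree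
      rw [coeff_sub, coeff_C_mul, hmonic, mul_one, sub_self]
  · rw [hroot, eval_mul, Lagrange.eval_nodal_at_node (mem_univ i), mul_zero]

theorem eval_zero_eq_eval_one_mul_prod (hv : Function.Injective v)
    (hp : p.natDegree ≤ Fintype.card ι) (hroot : ∀ i, p.eval (v i) = 0) (hv1 : ∀ i, v i ≠ 1) :
    p.eval 0 = p.eval 1 * ∏ i, v i / (v i - 1) := by
  rw [eq_C_coeff_mul_nodal_of_eval_eq_zero hv hp hroot]
  simp only [eval_mul, eval_C, Lagrange.eval_nodal, mul_assoc, ← prod_mul_distrib]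
  congr 1
  refine prod_congr rfl fun i _ => ?_
  have : v i - 1 ≠ 0 := sub_ne_zero.mpr (hv1 i)
  field_simp
  ring

end Polynomial

section System

variable {R : Type*} [CommSemiring R]

/-- With `v j = F_∞(j)`, `(systemPoly D f v).eval (α i)` is the left-hand side of the `i`-th row
of the linear system, and `(systemPoly D f v).eval 1` that of its last row. -/
noncomputable def systemPoly (D : ℕ) (f : ℤ → R) (v : ℕ → R) : R[X] :=
  ∑ j ∈ range D, C (v j) * ∑ x ∈ Icc j (D - 1), C (f ((x : ℤ) - D - j)) * X ^ x

theorem eval_systemPoly (D : ℕ) (f : ℤ → R) (v : ℕ → R) (s : R) :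
    (systemPoly D f v).eval s =
      ∑ j ∈ range D, v j * ∑ x ∈ Icc j (D - 1), f ((x : ℤ) - D - j) * s ^ x := by
  simp [systemPoly, eval_finsetSum]

theorem natDegree_systemPoly_le (D : ℕ) (f : ℤ → R) (v : ℕ → R) :
    (systemPoly D f v).natDegree ≤ D - 1 := by
  refine natDegree_sum_le_of_forall_le _ _ fun j _ => (natDegree_C_mul_le _ _).trans ?_
  refine natDegree_sum_le_of_forall_le _ _ fun x hx => (natDegree_C_mul_le _ _).trans ?_
  exact (natDegree_X_pow_le x).trans (mem_Icc.mp hx).2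

theorem eval_zero_systemPoly {D : ℕ} (hD : 1 ≤ D) (f : ℤ → R) (v : ℕ → R) :
    (systemPoly D f v).eval 0 = v 0 * f (-(D : ℤ)) := by
  rw [eval_systemPoly, sum_eq_single_of_mem 0 (mem_range.mpr hD)]
  · rw [sum_eq_single_of_mem 0 (mem_Icc.mpr ⟨le_rfl, Nat.zero_le _⟩)]
    · simp
    · intro x _ hx
      simp [zero_pow hx]
  · intro j _ hj
    refine mul_eq_zero_of_right _ (sum_eq_zero fun x hx => ?_)
    have : x ≠ 0 := by have := (mem_Icc.mp hx).1; omega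
    simp [zero_pow this]

theorem hasSum_sub_nat_eq_sum_Icc {M : Type*} [AddCommMonoid M] [TopologicalSpace M]
    {D : ℕ} {f : ℤ → M} (hf : ∀ k : ℤ, k < -(D : ℤ) → f k = 0) {j : ℕ} (hj : j < D) :
    HasSum (fun n : ℕ => f (-(j : ℤ) - 1 - n)) (∑ x ∈ Icc j (D - 1), f ((x : ℤ) - D - j)) := by
  have hzero : ∀ n ∉ range (D - j), f (-(j : ℤ) - 1 - n) = 0 := fun n hn =>
    hf _ (by rw [mem_range, not_lt] at hn; omega)
  suffices h : ∑ x ∈ Icc j (D - 1), f ((x : ℤ) - D - j) =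
      ∑ n ∈ range (D - j), f (-(j : ℤ) - 1 - n) by
    rw [h]
    exact hasSum_sum_of_ne_finset_zero hzero
  refine sum_nbij' (fun x => D - 1 - x) (fun n => D - 1 - n) ?_ ?_ ?_ ?_ ?_ <;>
    intro x hx <;> simp only [mem_Icc, mem_range] at hx ⊢
  · omega
  · omega
  · omega
  · omega
  · congr 1
    omega

theorem eval_one_systemPoly [TopologicalSpace R] [T2Space R] {D : ℕ} {f : ℤ → R}
    (hf : ∀ k : ℤ, k < -(D : ℤ) → f k = 0) {FN : ℤ → R}
    (hFN : ∀ k : ℤ, HasSum (fun n : ℕ => f (k - n)) (FN k)) (v : ℕ → R) :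
    (systemPoly D f v).eval 1 = ∑ j ∈ range D, v j * FN (-(j : ℤ) - 1) := by
  rw [eval_systemPoly]
  refine sum_congr rfl fun j hj => ?_
  rw [(hFN _).unique (hasSum_sub_nat_eq_sum_Icc hf (mem_range.mp hj))]
  simp

end System

theorem Finfty_zero_closed_form_general (D : ℕ) (hD : 1 ≤ D)
    (f : ℤ → ℝ)
    (hfsupp : ∀ j : ℤ, j < -(D : ℤ) → f j = 0)
    (hfD : 0 < f (-(D : ℤ)))
    (FN : ℤ → ℝ) (hFN : ∀ k : ℤ, HasSum (fun n : ℕ => f (k - n)) (FN k))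
    (ES : ℝ)
    (α : Fin (D - 1) → ℂ) (hαinj : Function.Injective α)
    (hαroot : ∀ i, ‖α i‖ ≤ 1 ∧ α i ≠ 1 ∧
      (∑' k : ℕ, (f ((k : ℤ) - D) : ℂ) * α i ^ k) = α i ^ D)
    (v : ℕ → ℝ)
    (hsys : ∀ i, ∑ j ∈ Finset.range D, (v j : ℂ) *
      ∑ x ∈ Finset.Icc j (D - 1), (f ((x : ℤ) - D - j) : ℂ) * α i ^ x = 0)
    (hlast : ∑ j ∈ Finset.range D, v j * FN (-(j : ℤ) - 1) = -ES) :
    (v 0 : ℂ) = ((-ES / f (-(D : ℤ))) : ℝ) * ∏ j : Fin (D - 1), α j / (α j - 1) := by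
  set Q := systemPoly D (fun k => (f k : ℂ)) (fun j => (v j : ℂ))
  have hQ0 : Q.eval 0 = v 0 * f (-(D : ℤ)) := eval_zero_systemPoly hD _ _
  have hQ1 : Q.eval 1 = -ES := by
    have hfsuppℂ : ∀ k : ℤ, k < -(D : ℤ) → (f k : ℂ) = 0 := fun k hk => by
      rw [hfsupp k hk, Complex.ofReal_zero]
    have hFNℂ : ∀ k : ℤ, HasSum (fun n : ℕ => (f (k - n) : ℂ)) (FN k) :=
      fun k => Complex.hasSum_ofReal.mpr (hFN k)
    rw [eval_one_systemPoly hfsuppℂ hFNℂ]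
    exact_mod_cast hlast
  have hratio := eval_zero_eq_eval_one_mul_prod (p := Q) hαinj
    (by simpa using natDegree_systemPoly_le D _ _) (fun i => (eval_systemPoly ..).trans (hsys i))
    (fun i => (hαroot i).2.1)
  have hfD_ne : (f (-(D : ℤ)) : ℂ) ≠ 0 := by exact_mod_cast hfD.ne'
  rw [hQ0, hQ1] at hratio
  push_cast
  rw [div_mul_eq_mul_div, eq_div_iff hfD_ne, ← hratio]

/-- Closed form for `F_∞(0)`: if `(v 0, …, v (D-1))` solves the linear system built from
the simple roots `α_1, …, α_{D-1}` of `G_N(s) = 1` in `{|s| ≤ 1, s ≠ 1}` together with the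
expectation row, then `F_∞(0) = (-E[S_N]/f_N(-D)) ∏_j α_j/(α_j - 1)`. -/
theorem Finfty_zero_closed_form (D : ℕ) (hD : 1 ≤ D)
    (f : ℤ → ℝ) (hf0 : ∀ j, 0 ≤ f j)
    (hfsupp : ∀ j : ℤ, j < -(D : ℤ) → f j = 0)
    (hfD : 0 < f (-(D : ℤ)))
    (hfsum : HasSum (fun k : ℕ => f ((k : ℤ) - D)) 1)
    (FN : ℤ → ℝ) (hFN : ∀ k : ℤ, HasSum (fun n : ℕ => f (k - n)) (FN k))
    (ES : ℝ) (hES : HasSum (fun k : ℕ => ((k : ℝ) - D) * f ((k : ℤ) - D)) ES)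
    (hESneg : ES < 0)
    (α : Fin (D - 1) → ℂ) (hαinj : Function.Injective α)
    (hαroot : ∀ i, ‖α i‖ ≤ 1 ∧ α i ≠ 1 ∧
      (∑' k : ℕ, (f ((k : ℤ) - D) : ℂ) * α i ^ k) = α i ^ D)
    (v : ℕ → ℝ) (hv01 : ∀ j, 0 ≤ v j ∧ v j ≤ 1)
    (hsys : ∀ i, ∑ j ∈ Finset.range D, (v j : ℂ) *
      ∑ x ∈ Finset.Icc j (D - 1), (f ((x : ℤ) - D - j) : ℂ) * α i ^ x = 0)
    (hlast : ∑ j ∈ Finset.range D, v j * FN (-(j : ℤ) - 1) = -ES) :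
    (v 0 : ℂ) = ((-ES / f (-(D : ℤ))) : ℝ) * ∏ j : Fin (D - 1), α j / (α j - 1) :=
  Finfty_zero_closed_form_general D hD f hfsupp hfD FN hFN ES α hαinj hαroot v hsys hlast
end

section
/- Under the same assumptions, F_∞(1) = -(F_N(-D+1)/f_N(-D)) F_∞(0) - (E[S_N]/f_N(-D)) Π_{j=1}^{D-1}(α_j - 1)^{-1} · (e_{D-1}(α) - e_{D-2}(α)), where e_k(α) denotes the k-th elementary symmetric polynomial in α_1, ..., α_{D-1}. -/
/-!
The linear system says that `P(s) = ∑_j v_j ∑_{j ≤ x < D} f(x - D - j) s^x`, a polynomial of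
degree at most `D - 1`, vanishes at the `D - 1` distinct roots `α_j`; hence `P = c ∏ (X - α_j)`.
Vieta's formulas for its two lowest coefficients give
`(v_0 f(1-D) + v_1 f(-D)) e_{D-1} = -v_0 f(-D) e_{D-2}`, and since `f` vanishes below `-D`,
`F_N(1-D) = f(1-D) + f(-D)`. Eliminating `c` and inserting the closed form of `v_0 = F_∞(0)`
(where `e_{D-1} = ∏ α_j ≠ 0`) gives the formula for `v_1 = F_∞(1)`.
-/

open Polynomial Finset

theorem Finset.prod_X_sub_C_coeff {R σ : Type*} [CommRing R] (s : Finset σ) (r : σ → R) {k : ℕ}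
    (h : k ≤ #s) :
    (∏ i ∈ s, (X - C (r i))).coeff k =
      (-1) ^ (#s - k) * ∑ t ∈ s.powersetCard (#s - k), ∏ i ∈ t, r i := by
  have := (s.val.map r).prod_X_sub_C_coeff (k := k) (by simpa using h)
  rw [Multiset.map_map, Finset.esymm_map_val, Multiset.card_map, Finset.card_val] at this
  exact this

theorem exists_eq_C_mul_prod_X_sub_C {K ι : Type*} [Field K] [Fintype ι] {P : K[X]} {α : ι → K}
    (hα : Function.Injective α) (hroot : ∀ i, P.eval (α i) = 0)
    (hdeg : P.natDegree ≤ Fintype.card ι) :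
    ∃ c, P = C c * ∏ i, (X - C (α i)) := by
  by_cases hP : P = 0
  · exact ⟨0, by simp [hP]⟩
  have hdvd : ∏ i, (X - C (α i)) ∣ P :=
    Finset.prod_dvd_of_coprime
      (fun i _ j _ hij => isCoprime_X_sub_C_of_isUnit_sub (sub_ne_zero.2 (hα.ne hij)).isUnit)
      fun i _ => dvd_iff_isRoot.2 (hroot i)
  obtain ⟨u, rfl⟩ := hdvd
  have hu : u ≠ 0 := right_ne_zero_of_mul hP
  have hmonic : (∏ i, (X - C (α i))).Monic := monic_prod_of_monic _ _ fun i _ => monic_X_sub_C _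
  rw [natDegree_mul hmonic.ne_zero hu, natDegree_finsetProd_X_sub_C_eq_card, card_univ] at hdeg
  refine ⟨u.coeff 0, ?_⟩
  rw [mul_comm, ← eq_C_of_natDegree_eq_zero (by omega)]

theorem coeff_one_mul_esymm_eq_neg {K ι : Type*} [Field K] [Fintype ι] {P : K[X]} {α : ι → K}
    (hα : Function.Injective α) (hroot : ∀ i, P.eval (α i) = 0)
    (hdeg : P.natDegree ≤ Fintype.card ι) (hι : 1 ≤ Fintype.card ι) :
    P.coeff 1 * ∑ t ∈ univ.powersetCard (Fintype.card ι), ∏ i ∈ t, α i =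
      -(P.coeff 0 * ∑ t ∈ univ.powersetCard (Fintype.card ι - 1), ∏ i ∈ t, α i) := by
  obtain ⟨c, rfl⟩ := exists_eq_C_mul_prod_X_sub_C hα hroot hdeg
  simp only [coeff_C_mul, Finset.prod_X_sub_C_coeff _ _ (hι.trans_eq card_univ.symm),
    Finset.prod_X_sub_C_coeff _ _ (Nat.zero_le _), card_univ, Nat.sub_zero]
  obtain ⟨n, hn⟩ := Nat.exists_eq_add_of_le' hι
  rw [hn, Nat.add_sub_cancel]
  ring

section LinearSystem

variable {R : Type*} [CommSemiring R] (D : ℕ) (g : ℤ → R) (v : ℕ → R)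

noncomputable def linearSystemPoly : R[X] :=
  ∑ j ∈ range D, C (v j) * ∑ x ∈ Icc j (D - 1), C (g (x - D - j)) * X ^ x

theorem eval_linearSystemPoly (a : R) :
    (linearSystemPoly D g v).eval a =
      ∑ j ∈ range D, v j * ∑ x ∈ Icc j (D - 1), g (x - D - j) * a ^ x := by
  simp [linearSystemPoly, eval_finsetSum]

theorem natDegree_linearSystemPoly_le : (linearSystemPoly D g v).natDegree ≤ D - 1 :=
  natDegree_sum_le_of_forall_le _ _ fun _ _ => (natDegree_C_mul_le _ _).trans <|
    natDegree_sum_le_of_forall_le _ _ fun _ hx =>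
      (natDegree_C_mul_X_pow_le _ _).trans (mem_Icc.1 hx).2

theorem coeff_linearSystemPoly {n : ℕ} (hn : n < D) :
    (linearSystemPoly D g v).coeff n = ∑ j ∈ range (n + 1), v j * g (n - D - j) := by
  simp only [linearSystemPoly, finsetSum_coeff, coeff_C_mul, coeff_X_pow, mul_ite, mul_one,
    mul_zero, Finset.sum_ite_eq, mem_Icc]
  rw [← Finset.sum_filter]
  refine Finset.sum_congr (ext fun j => ?_) fun _ _ => rfl
  simp only [mem_filter, mem_range]
  omega

theorem coeff_relation_of_linearSystem {K ι : Type*} [Field K] [Fintype ι] {D : ℕ} (hD : 2 ≤ D)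
    (hι : Fintype.card ι = D - 1) {g : ℤ → K} {v : ℕ → K} {α : ι → K}
    (hα : Function.Injective α)
    (hsys : ∀ i, ∑ j ∈ range D, v j * ∑ x ∈ Icc j (D - 1), g (x - D - j) * α i ^ x = 0) :
    (v 0 * g (1 - D) + v 1 * g (-D)) * ∑ t ∈ univ.powersetCard (D - 1), ∏ i ∈ t, α i =
      -(v 0 * g (-D) * ∑ t ∈ univ.powersetCard (D - 2), ∏ i ∈ t, α i) := by
  have := coeff_one_mul_esymm_eq_neg hα (P := linearSystemPoly D g v)
    (fun i => by rw [eval_linearSystemPoly]; exact hsys i)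
    (hι ▸ natDegree_linearSystemPoly_le D g v) (by omega)
  rw [coeff_linearSystemPoly _ _ _ (by omega), coeff_linearSystemPoly _ _ _ (by omega), hι,
    show D - 1 - 1 = D - 2 by omega] at this
  simpa [sum_range_succ, add_comm] using this

end LinearSystem

theorem hasSum_sub_nat_of_eq_zero_of_lt {M : Type*} [AddCommMonoid M] [TopologicalSpace M]
    {f : ℤ → M} {m : ℤ} (hf : ∀ j < m, f j = 0) :
    HasSum (fun n : ℕ => f (m + 1 - n)) (f (m + 1) + f m) := by
  have := hasSum_sum_of_ne_finset_zero (L := SummationFilter.unconditional ℕ) (s := range 2)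
    (f := fun n : ℕ => f (m + 1 - n)) fun n hn => hf _ (by simp only [mem_range, not_lt] at hn; omega)
  simpa [sum_range_succ] using this

theorem ne_zero_of_tsum_mul_pow_eq_pow {K : Type*} [Field K] [TopologicalSpace K] {g : ℕ → K}
    {a : K} {D : ℕ} (hD : D ≠ 0) (hg : g 0 ≠ 0) (h : ∑' k, g k * a ^ k = a ^ D) : a ≠ 0 := by
  rintro rfl
  rw [tsum_eq_single 0 fun k hk => by simp [hk], zero_pow hD] at h
  simp_all

theorem Finfty_one_closed_form_general (D : ℕ) (hD : 2 ≤ D)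
    (f : ℤ → ℝ)
    (hfsupp : ∀ j : ℤ, j < -(D : ℤ) → f j = 0)
    (hfD : 0 < f (-(D : ℤ)))
    (FN : ℤ → ℝ) (hFN : ∀ k : ℤ, HasSum (fun n : ℕ => f (k - n)) (FN k))
    (ES : ℝ)
    (α : Fin (D - 1) → ℂ) (hαinj : Function.Injective α)
    (hαroot : ∀ i, ‖α i‖ ≤ 1 ∧ α i ≠ 1 ∧
      (∑' k : ℕ, (f ((k : ℤ) - D) : ℂ) * α i ^ k) = α i ^ D)
    (v : ℕ → ℝ)
    (hsys : ∀ i, ∑ j ∈ Finset.range D, (v j : ℂ) *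
      ∑ x ∈ Finset.Icc j (D - 1), (f ((x : ℤ) - D - j) : ℂ) * α i ^ x = 0)
    (hv0 : (v 0 : ℂ) = ((-ES / f (-(D : ℤ))) : ℝ) * ∏ j : Fin (D - 1), α j / (α j - 1))
    (e : ℕ → ℂ)
    (he : ∀ k : ℕ, e k = ∑ t ∈ (Finset.univ : Finset (Fin (D - 1))).powersetCard k,
      ∏ j ∈ t, α j) :
    (v 1 : ℂ) = -((FN (-(D : ℤ) + 1) / f (-(D : ℤ))) : ℝ) * (v 0 : ℂ)
      - ((ES / f (-(D : ℤ))) : ℝ) * (∏ j : Fin (D - 1), (α j - 1)⁻¹)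
        * (e (D - 1) - e (D - 2)) := by
  have hf0 : (f (-D) : ℂ) ≠ 0 := by exact_mod_cast hfD.ne'
  have hcard : Fintype.card (Fin (D - 1)) = D - 1 := Fintype.card_fin _
  have hα0 : ∀ i, α i ≠ 0 := fun i =>
    ne_zero_of_tsum_mul_pow_eq_pow (by omega) (by simpa using hf0) (hαroot i).2.2
  have hprod : e (D - 1) = ∏ j, α j := by
    have hself := powersetCard_self (univ : Finset (Fin (D - 1)))
    rw [card_univ, hcard] at hself
    rw [he, hself, sum_singleton]
  have he0 : e (D - 1) ≠ 0 := hprod ▸ prod_ne_zero_iff.2 fun i _ => hα0 i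
  have hFN1 : FN (-D + 1) = f (1 - D) + f (-D) := by
    rw [(hFN _).unique (hasSum_sub_nat_of_eq_zero_of_lt hfsupp), neg_add_eq_sub]
  have hrel := coeff_relation_of_linearSystem hD hcard hαinj (g := fun k => (f k : ℂ)) hsys
  rw [← he, ← he] at hrel
  have hv0' : (ES : ℂ) * (∏ j, (α j - 1))⁻¹ * e (D - 1) = -(v 0 * f (-D)) := by
    rw [hv0, prod_div_distrib, ← hprod]
    push_cast
    field_simp
  rw [prod_inv_distrib, hFN1]
  push_cast
  field_simp
  refine mul_left_cancel₀ he0 ?_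
  linear_combination hrel + (e (D - 1) - e (D - 2)) * hv0'

/-- Closed form for `F_∞(1)`:
`F_∞(1) = -(F_N(-D+1)/f_N(-D)) F_∞(0) - (E[S_N]/f_N(-D)) ∏_j (α_j-1)⁻¹ (e_{D-1}(α) - e_{D-2}(α))`,
where `e_k` is the `k`-th elementary symmetric polynomial of the simple roots
`α_1, …, α_{D-1}` of `G_N(s) = 1` in the punctured closed unit disk. -/
theorem Finfty_one_closed_form (D : ℕ) (hD : 2 ≤ D)
    (f : ℤ → ℝ) (hf0 : ∀ j, 0 ≤ f j)
    (hfsupp : ∀ j : ℤ, j < -(D : ℤ) → f j = 0)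
    (hfD : 0 < f (-(D : ℤ)))
    (hfsum : HasSum (fun k : ℕ => f ((k : ℤ) - D)) 1)
    (FN : ℤ → ℝ) (hFN : ∀ k : ℤ, HasSum (fun n : ℕ => f (k - n)) (FN k))
    (ES : ℝ) (hES : HasSum (fun k : ℕ => ((k : ℝ) - D) * f ((k : ℤ) - D)) ES)
    (hESneg : ES < 0)
    (α : Fin (D - 1) → ℂ) (hαinj : Function.Injective α)
    (hαroot : ∀ i, ‖α i‖ ≤ 1 ∧ α i ≠ 1 ∧
      (∑' k : ℕ, (f ((k : ℤ) - D) : ℂ) * α i ^ k) = α i ^ D)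
    (v : ℕ → ℝ) (hv01 : ∀ j, 0 ≤ v j ∧ v j ≤ 1)
    (hsys : ∀ i, ∑ j ∈ Finset.range D, (v j : ℂ) *
      ∑ x ∈ Finset.Icc j (D - 1), (f ((x : ℤ) - D - j) : ℂ) * α i ^ x = 0)
    (hlast : ∑ j ∈ Finset.range D, v j * FN (-(j : ℤ) - 1) = -ES)
    (hv0 : (v 0 : ℂ) = ((-ES / f (-(D : ℤ))) : ℝ) * ∏ j : Fin (D - 1), α j / (α j - 1))
    (e : ℕ → ℂ)
    (he : ∀ k : ℕ, e k = ∑ t ∈ (Finset.univ : Finset (Fin (D - 1))).powersetCard k,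
      ∏ j ∈ t, α j) :
    (v 1 : ℂ) = -((FN (-(D : ℤ) + 1) / f (-(D : ℤ))) : ℝ) * (v 0 : ℂ)
      - ((ES / f (-(D : ℤ))) : ℝ) * (∏ j : Fin (D - 1), (α j - 1)⁻¹)
        * (e (D - 1) - e (D - 2)) :=
  Finfty_one_closed_form_general D hD f hfsupp hfD FN hFN ES α hαinj hαroot v hsys hv0 e he
end

section
/- In the setting P(X = -3) = P(X = 1) = 1/2 with i.i.d. copies X_1, X_2, ..., and α_1, α_2 = ᾱ_1 the roots of s³ - s² - s - 1 = 0 inside the unit disk, one has F_∞(-3) = α_1α_2/((α_1-1)(α_2-1)), F_∞(-2) = -(α_1+α_2)/((α_1-1)(α_2-1)), and F_∞(-1) = 1/((α_1-1)(α_2-1)). -/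
/-!
The real root `b ≈ 1.839` of `s³ = s² + s + 1` satisfies `b + b⁻³ = 2`, so `b ^ S_n` is a
martingale for the walk `S_n`. Since the walk moves up only by `1`, it leaves `(-∞, x]` exactly at
`x + 1`; stopping the martingale there, and noting that the surviving mass of `(3/2) ^ S_n` decays
like `(97/108) ^ n`, gives `F_∞(x) = (1 - b ^ (-(x + 4))) / 2` for `-3 ≤ x ≤ -1` (the first step
has to be `-3`). Vieta's formulas for the cubic, `α₁ α₂ b = 1` and `α₁ + α₂ = 1 - b`, turn these
into the stated values.
-/

open MeasureTheory ProbabilityTheory Filter Topology Finset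

lemma zpow_le_zpow_left_of_nonpos {K : Type*} [Field K] [LinearOrder K] [IsStrictOrderedRing K]
    {a b : K} (ha : 0 < a) (hab : a ≤ b) {s : ℤ} (hs : s ≤ 0) : b ^ s ≤ a ^ s := by
  have h : a ^ (-s) ≤ b ^ (-s) := zpow_le_zpow_left₀ (by omega) ha.le hab
  calc b ^ s = (b ^ (-s))⁻¹ := by rw [zpow_neg, inv_inv]
    _ ≤ (a ^ (-s))⁻¹ := inv_anti₀ (by positivity) h
    _ = a ^ s := by rw [zpow_neg, inv_inv]

lemma vieta_of_tribonacci_roots {K : Type*} [Field K] {a c : K}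
    (ha : a ^ 3 - a ^ 2 - a - 1 = 0) (hc : c ^ 3 - c ^ 2 - c - 1 = 0) (hne : a ≠ c) :
    a * c * (1 - a - c) = 1 ∧ (1 - a - c) ^ 3 = (1 - a - c) ^ 2 + (1 - a - c) + 1 := by
  have hquad : a ^ 2 + a * c + c ^ 2 - a - c - 1 = 0 := by
    apply mul_left_cancel₀ (sub_ne_zero.mpr hne)
    linear_combination ha - hc
  exact ⟨by linear_combination ha - a * hquad,
    by linear_combination (1 - a - c) * hquad + ha - a * hquad⟩

lemma exists_tribonacci_constant {α₁ α₂ : ℂ} (hroot1 : α₁ ^ 3 - α₁ ^ 2 - α₁ - 1 = 0)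
    (hroot2 : α₂ ^ 3 - α₂ ^ 2 - α₂ - 1 = 0) (hconj : α₂ = starRingEnd ℂ α₁) (hne : α₁ ≠ α₂) :
    ∃ b : ℝ, α₁ + α₂ = 1 - b ∧ α₁ * α₂ * b = 1 ∧ b ^ 3 = b ^ 2 + b + 1 ∧ 3 / 2 ≤ b := by
  obtain ⟨hprod, hcube⟩ := vieta_of_tribonacci_roots hroot1 hroot2 hne
  have hb : (((1 - α₁ - α₂).re : ℝ) : ℂ) = 1 - α₁ - α₂ := by
    rw [hconj]
    apply Complex.ext <;> simp
  set b := (1 - α₁ - α₂).re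
  have hb3 : b ^ 3 = b ^ 2 + b + 1 := by
    rw [← hb] at hcube
    exact_mod_cast hcube
  have hnorm : Complex.normSq α₁ * b = 1 := by
    rw [← hb, hconj, Complex.mul_conj] at hprod
    exact_mod_cast hprod
  have hb0 : 0 < b := pos_of_mul_pos_right (hnorm ▸ one_pos) (Complex.normSq_nonneg α₁)
  refine ⟨b, by rw [hb]; ring, by rw [hb]; exact hprod, hb3, ?_⟩
  nlinarith [sq_nonneg (b - 1)]

namespace CoinWalk

def step (e : Bool) : ℤ := if e then 1 else -3

def stepAt {m : ℕ} (ε : Fin m → Bool) (j : ℕ) : ℤ :=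
  if h : j < m then step (ε ⟨j, h⟩) else 0

def partialSum {m : ℕ} (ε : Fin m → Bool) (k : ℕ) : ℤ :=
  ∑ j ∈ range (k + 1), stepAt ε j

def pathsBelow (x : ℤ) (m : ℕ) : Finset (Fin m → Bool) :=
  {ε | ∀ k < m, partialSum ε k ≤ x}

def IsHarmonic (h : ℤ → ℝ) : Prop :=
  ∀ s, h (s + 1) + h (s - 3) = 2 * h s

lemma step_injective : Function.Injective step := by
  intro a b h
  cases a <;> cases b <;> simp_all [step]

lemma stepAt_of_lt {m : ℕ} (ε : Fin m → Bool) {j : ℕ} (hj : j < m) :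
    stepAt ε j = step (ε ⟨j, hj⟩) :=
  dif_pos hj

lemma mem_pathsBelow {x : ℤ} {m : ℕ} {ε : Fin m → Bool} :
    ε ∈ pathsBelow x m ↔ ∀ k < m, partialSum ε k ≤ x := by
  simp [pathsBelow]

section Snoc

variable {n : ℕ} (e : Bool)

lemma stepAt_snoc_of_lt (ε : Fin n → Bool) {j : ℕ} (hj : j < n) :
    stepAt (Fin.snoc ε e : Fin (n + 1) → Bool) j = stepAt ε j := by
  rw [stepAt_of_lt _ (hj.trans n.lt_succ_self), stepAt_of_lt _ hj]
  exact congrArg step (Fin.snoc_castSucc (α := fun _ => Bool) e ε ⟨j, hj⟩)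

lemma stepAt_snoc_last (ε : Fin n → Bool) :
    stepAt (Fin.snoc ε e : Fin (n + 1) → Bool) n = step e := by
  rw [stepAt_of_lt _ n.lt_succ_self]
  exact congrArg step (Fin.snoc_last (α := fun _ => Bool) e ε)

lemma partialSum_snoc_of_lt (ε : Fin n → Bool) {k : ℕ} (hk : k < n) :
    partialSum (Fin.snoc ε e : Fin (n + 1) → Bool) k = partialSum ε k :=
  sum_congr rfl fun j hj => stepAt_snoc_of_lt e ε (by rw [mem_range] at hj; omega)

lemma partialSum_snoc_last (ε : Fin (n + 1) → Bool) :
    partialSum (Fin.snoc ε e : Fin (n + 2) → Bool) (n + 1) = partialSum ε n + step e := by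
  rw [partialSum, sum_range_succ, stepAt_snoc_last, ← partialSum_snoc_of_lt e ε n.lt_succ_self,
    partialSum]

lemma snoc_mem_pathsBelow {x : ℤ} {ε : Fin (n + 1) → Bool} :
    (Fin.snoc ε e : Fin (n + 2) → Bool) ∈ pathsBelow x (n + 2) ↔
      ε ∈ pathsBelow x (n + 1) ∧ partialSum ε n + step e ≤ x := by
  simp only [mem_pathsBelow, ← partialSum_snoc_last]
  constructor
  · intro h
    exact ⟨fun k hk => partialSum_snoc_of_lt e ε hk ▸ h k (by omega), h (n + 1) (by omega)⟩
  · rintro ⟨h, hlast⟩ k hk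
    rcases Nat.lt_succ_iff_lt_or_eq.mp hk with hk | rfl
    · exact partialSum_snoc_of_lt e ε hk ▸ h k hk
    · exact hlast

end Snoc

lemma sum_snoc {M : Type*} [AddCommMonoid M] {n : ℕ} (f : (Fin (n + 1) → Bool) → M) :
    ∑ ε, f ε = ∑ ε : Fin n → Bool, ∑ e, f (Fin.snoc ε e) := by
  rw [← (Fin.snocEquiv fun _ => Bool).sum_comp, Fintype.sum_prod_type, sum_comm]
  rfl

lemma sum_pathsBelow_succ (x : ℤ) (n : ℕ) (g : ℤ → ℝ) :
    ∑ ε ∈ pathsBelow x (n + 2), g (partialSum ε (n + 1)) =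
      ∑ ε ∈ pathsBelow x (n + 1), ∑ e,
        if partialSum ε n + step e ≤ x then g (partialSum ε n + step e) else 0 := by
  classical
  calc ∑ ε ∈ pathsBelow x (n + 2), g (partialSum ε (n + 1))
      = ∑ ε, if ε ∈ pathsBelow x (n + 2) then g (partialSum ε (n + 1)) else 0 := by
        rw [sum_ite_mem, univ_inter]
    _ = ∑ ε : Fin (n + 1) → Bool, ∑ e,
          if (Fin.snoc ε e : Fin (n + 2) → Bool) ∈ pathsBelow x (n + 2) then
            g (partialSum (Fin.snoc ε e : Fin (n + 2) → Bool) (n + 1)) else 0 := sum_snoc _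
    _ = ∑ ε, if ε ∈ pathsBelow x (n + 1) then ∑ e,
          (if partialSum ε n + step e ≤ x then g (partialSum ε n + step e) else 0) else 0 := by
        refine sum_congr rfl fun ε _ => ?_
        simp only [snoc_mem_pathsBelow, partialSum_snoc_last]
        split_ifs with h <;> simp [h]
    _ = _ := by rw [sum_ite_mem, univ_inter]

lemma sum_pathsBelow_succ_of_isHarmonic {x : ℤ} {h : ℤ → ℝ} (hh : IsHarmonic h)
    (hx : h (x + 1) = 0) (n : ℕ) :
    ∑ ε ∈ pathsBelow x (n + 2), h (partialSum ε (n + 1)) =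
      2 * ∑ ε ∈ pathsBelow x (n + 1), h (partialSum ε n) := by
  rw [sum_pathsBelow_succ, mul_sum]
  refine sum_congr rfl fun ε hε => ?_
  have hle : partialSum ε n ≤ x := mem_pathsBelow.mp hε n n.lt_succ_self
  -- a path that would exit does so exactly at `x + 1`, where `h` vanishes
  have hup : (if partialSum ε n + 1 ≤ x then h (partialSum ε n + 1) else 0) =
      h (partialSum ε n + 1) := by
    split_ifs with hlt
    · rfl
    · rw [show partialSum ε n = x by omega, hx]
  simp only [Fintype.sum_bool, step, if_true, hup, Bool.false_eq_true, if_false]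
  rw [if_pos (by omega), ← sub_eq_add_neg, hh]

lemma sum_pathsBelow_succ_le {x : ℤ} {q : ℤ → ℝ} {r : ℝ} (hq : ∀ s, 0 ≤ q s)
    (hr : ∀ s, q (s + 1) + q (s - 3) ≤ r * q s) (n : ℕ) :
    ∑ ε ∈ pathsBelow x (n + 2), q (partialSum ε (n + 1)) ≤
      r * ∑ ε ∈ pathsBelow x (n + 1), q (partialSum ε n) := by
  rw [sum_pathsBelow_succ, mul_sum]
  refine sum_le_sum fun ε _ => ?_
  refine le_trans ?_ (hr (partialSum ε n))
  simp only [Fintype.sum_bool, step, if_true, Bool.false_eq_true, if_false, ← sub_eq_add_neg]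
  gcongr <;> split_ifs <;> simp [hq]

lemma pathsBelow_one {x : ℤ} (hx : -3 ≤ x) (hx' : x ≤ -1) :
    pathsBelow x 1 = {fun _ => false} := by
  ext ε
  have hε : partialSum ε 0 = step (ε 0) := by simp [partialSum, stepAt]
  simp only [mem_pathsBelow, Nat.lt_one_iff, forall_eq, hε, mem_singleton]
  constructor
  · intro h
    funext j
    rw [Subsingleton.elim j 0]
    cases hj : ε 0
    · rfl
    · simp [hj, step] at h; omega
  · rintro rfl
    simp [step, hx]

lemma sum_pathsBelow_of_isHarmonic {x : ℤ} (hx : -3 ≤ x) (hx' : x ≤ -1) {h : ℤ → ℝ}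
    (hh : IsHarmonic h) (hx1 : h (x + 1) = 0) (n : ℕ) :
    ∑ ε ∈ pathsBelow x (n + 1), h (partialSum ε n) = 2 ^ n * h (-3) := by
  induction n with
  | zero => simp [pathsBelow_one hx hx', partialSum, stepAt, step]
  | succ n ih => rw [sum_pathsBelow_succ_of_isHarmonic hh hx1, ih, pow_succ]; ring

lemma sum_pathsBelow_le {x : ℤ} (hx : -3 ≤ x) (hx' : x ≤ -1) {q : ℤ → ℝ} {r : ℝ}
    (hq : ∀ s, 0 ≤ q s) (hr0 : 0 ≤ r) (hr : ∀ s, q (s + 1) + q (s - 3) ≤ r * q s) (n : ℕ) :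
    ∑ ε ∈ pathsBelow x (n + 1), q (partialSum ε n) ≤ r ^ n * q (-3) := by
  induction n with
  | zero => simp [pathsBelow_one hx hx', partialSum, stepAt, step]
  | succ n ih =>
    calc _ ≤ r * ∑ ε ∈ pathsBelow x (n + 1), q (partialSum ε n) :=
          sum_pathsBelow_succ_le hq hr n
      _ ≤ r * (r ^ n * q (-3)) := by gcongr
      _ = r ^ (n + 1) * q (-3) := by ring

lemma IsHarmonic.sub_const {h : ℤ → ℝ} (hh : IsHarmonic h) (c : ℝ) :
    IsHarmonic fun s => h s - c := fun s => by
  linear_combination hh s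

lemma isHarmonic_zpow {b : ℝ} (hb : b ^ 3 = b ^ 2 + b + 1) : IsHarmonic fun s => b ^ s := by
  have hb0 : b ≠ 0 := by rintro rfl; norm_num at hb
  intro s
  show b ^ (s + 1) + b ^ (s - 3) = 2 * b ^ s
  have h2 : b + (b ^ 3)⁻¹ = 2 := by
    field_simp
    linear_combination (b - 1) * hb
  rw [zpow_add₀ hb0, zpow_sub₀ hb0, zpow_one, zpow_ofNat, div_eq_mul_inv]
  linear_combination b ^ s * h2

lemma tendsto_sum_pathsBelow_zpow_div {x : ℤ} (hx : -3 ≤ x) (hx' : x ≤ -1) {b : ℝ}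
    (hb : 3 / 2 ≤ b) :
    Tendsto (fun n : ℕ => (∑ ε ∈ pathsBelow x (n + 1), b ^ partialSum ε n) / 2 ^ (n + 1))
      atTop (𝓝 0) := by
  set q : ℤ → ℝ := fun s => (3 / 2 : ℝ) ^ s
  -- `q` decays along the walk at rate `(3/2 + (2/3)^3) / 2 = 97/108 < 1`
  have hq : ∀ s, q (s + 1) + q (s - 3) ≤ 97 / 54 * q s := fun s => by
    have h32 : (3 / 2 : ℝ) ≠ 0 := by norm_num
    simp only [q, zpow_add₀ h32, zpow_sub₀ h32]
    norm_num
    linarith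
  have hupper : ∀ n : ℕ, (∑ ε ∈ pathsBelow x (n + 1), b ^ partialSum ε n) / 2 ^ (n + 1) ≤
      (97 / 108 : ℝ) ^ n * (q (-3) / 2) := fun n => by
    have hsum : ∑ ε ∈ pathsBelow x (n + 1), b ^ partialSum ε n ≤ (97 / 54) ^ n * q (-3) :=
      calc _ ≤ ∑ ε ∈ pathsBelow x (n + 1), q (partialSum ε n) :=
            sum_le_sum fun ε hε => zpow_le_zpow_left_of_nonpos (by norm_num) hb
              ((mem_pathsBelow.mp hε n n.lt_succ_self).trans (by omega))
        _ ≤ _ := sum_pathsBelow_le hx hx' (fun s => by positivity) (by norm_num) hq n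
    rw [div_le_iff₀ (by positivity)]
    calc _ ≤ (97 / 54) ^ n * q (-3) := hsum
      _ = _ := by
        rw [show (97 / 108 : ℝ) = 97 / 54 / 2 by norm_num, div_pow _ 2, pow_succ]
        field_simp
  have hlower : ∀ n : ℕ, 0 ≤ (∑ ε ∈ pathsBelow x (n + 1), b ^ partialSum ε n) / 2 ^ (n + 1) :=
    fun n => div_nonneg (sum_nonneg fun ε _ => by positivity) (by positivity)
  have hgeom : Tendsto (fun n : ℕ => (97 / 108 : ℝ) ^ n * (q (-3) / 2)) atTop (𝓝 0) := by
    simpa using (tendsto_pow_atTop_nhds_zero_of_lt_one (by norm_num) (by norm_num)).mul_const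
      (q (-3) / 2)
  exact tendsto_of_tendsto_of_tendsto_of_le_of_le tendsto_const_nhds hgeom hlower hupper

theorem tendsto_card_pathsBelow_div {x : ℤ} (hx : -3 ≤ x) (hx' : x ≤ -1) {b : ℝ}
    (hb3 : b ^ 3 = b ^ 2 + b + 1) (hb : 3 / 2 ≤ b) :
    Tendsto (fun n : ℕ => (#(pathsBelow x (n + 1)) : ℝ) / 2 ^ (n + 1)) atTop
      (𝓝 ((1 - b ^ (-(x + 4))) / 2)) := by
  have hb0 : b ≠ 0 := by positivity
  have hbx : b ^ (x + 1) ≠ 0 := by positivity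
  -- optional stopping for the martingale `b ^ S_n`, stopped on leaving `(-∞, x]`
  have hcard : ∀ n : ℕ, (#(pathsBelow x (n + 1)) : ℝ) / 2 ^ (n + 1) =
      ((∑ ε ∈ pathsBelow x (n + 1), b ^ partialSum ε n) / 2 ^ (n + 1)
        - (b ^ (-3 : ℤ) - b ^ (x + 1)) / 2) / b ^ (x + 1) := fun n => by
    have h := sum_pathsBelow_of_isHarmonic hx hx'
      ((isHarmonic_zpow hb3).sub_const (b ^ (x + 1))) (sub_self _) n
    rw [sum_sub_distrib, sum_const, nsmul_eq_mul, sub_eq_iff_eq_add'] at h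
    rw [eq_div_iff hbx, h, pow_succ]
    field_simp
    ring
  have hlim := ((tendsto_sum_pathsBelow_zpow_div hx hx' hb).sub_const
    ((b ^ (-3 : ℤ) - b ^ (x + 1)) / 2)).div_const (b ^ (x + 1))
  convert hlim using 2
  · exact hcard _
  · rw [show -(x + 4) = -3 - (x + 1) by ring, zpow_sub₀ hb0]
    field_simp
    ring

section Probability

variable {Ω : Type*} [MeasurableSpace Ω] {μ : Measure Ω} {X : ℕ → Ω → ℤ}

lemma measure_eq_step (hlaw1 : ∀ k, μ {ω | X k ω = -3} = 1 / 2)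
    (hlaw2 : ∀ k, μ {ω | X k ω = 1} = 1 / 2) (k : ℕ) (e : Bool) :
    μ {ω | X k ω = step e} = 1 / 2 := by
  cases e
  exacts [hlaw1 k, hlaw2 k]

lemma ae_exists_eq_step [IsProbabilityMeasure μ] (hmeas : ∀ k, Measurable (X k))
    (hlaw1 : ∀ k, μ {ω | X k ω = -3} = 1 / 2) (hlaw2 : ∀ k, μ {ω | X k ω = 1} = 1 / 2)
    (k : ℕ) : ∀ᵐ ω ∂μ, ∃ e, X k ω = step e := by
  have hset : {ω | ∃ e, X k ω = step e} = {ω | X k ω = -3} ∪ {ω | X k ω = 1} := by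
    ext ω
    simp [step, or_comm]
  have hdisj : Disjoint {ω | X k ω = -3} {ω | X k ω = 1} :=
    Set.disjoint_left.2 fun ω h h' => by simp_all
  have hmeasU : MeasurableSet ({ω | X k ω = -3} ∪ {ω | X k ω = 1}) :=
    (hmeas k (measurableSet_singleton _)).union (hmeas k (measurableSet_singleton _))
  rw [ae_iff, ← Set.compl_ofPred, prob_compl_eq_zero_iff (hset ▸ hmeasU), hset,
    measure_union hdisj (hmeas k (measurableSet_singleton 1)), hlaw1, hlaw2, ENNReal.add_halves]

lemma measure_cylinder (hindep : iIndepFun X μ) (hlaw1 : ∀ k, μ {ω | X k ω = -3} = 1 / 2)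
    (hlaw2 : ∀ k, μ {ω | X k ω = 1} = 1 / 2) {m : ℕ} (ε : Fin m → Bool) :
    μ {ω | ∀ j : Fin m, X j ω = step (ε j)} = (1 / 2) ^ m := by
  have h := (hindep.precomp Fin.val_injective).measure_inter_preimage_eq_mul univ
    (sets := fun j => {step (ε j)}) fun _ _ => measurableSet_singleton _
  convert h using 1
  · congr 1
    ext ω
    simp
  · simp [Set.preimage, measure_eq_step hlaw1 hlaw2]

lemma measure_eq_card_mul [IsProbabilityMeasure μ] (hmeas : ∀ k, Measurable (X k))
    (hindep : iIndepFun X μ) (hlaw1 : ∀ k, μ {ω | X k ω = -3} = 1 / 2)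
    (hlaw2 : ∀ k, μ {ω | X k ω = 1} = 1 / 2) {m : ℕ} (A : Finset (Fin m → Bool)) {E : Set Ω}
    (hE : ∀ ω ε, (∀ j : Fin m, X j ω = step (ε j)) → (ω ∈ E ↔ ε ∈ A)) :
    μ E = #A * (1 / 2) ^ m := by
  have hae : ∀ᵐ ω ∂μ, ∀ j : Fin m, ∃ e, X j ω = step e :=
    ae_all_iff.2 fun j => ae_exists_eq_step hmeas hlaw1 hlaw2 j
  have hEq : E =ᵐ[μ] ⋃ ε ∈ A, {ω | ∀ j : Fin m, X j ω = step (ε j)} := by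
    refine Filter.eventuallyEq_set.2 (hae.mono fun ω hω => ?_)
    choose ε hε using hω
    simp only [Set.mem_iUnion, Set.mem_ofPred_eq, exists_prop]
    exact ⟨fun h => ⟨ε, (hE ω ε hε).1 h, hε⟩, fun ⟨ε', hA, hε'⟩ => (hE ω ε' hε').2 hA⟩
  have hdisj : (A : Set (Fin m → Bool)).PairwiseDisjoint
      fun ε => {ω | ∀ j : Fin m, X j ω = step (ε j)} := fun ε _ ε' _ hne =>
    Set.disjoint_left.2 fun ω h h' =>
      hne (funext fun j => step_injective ((h j).symm.trans (h' j)))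
  have hmeasCyl : ∀ ε ∈ A, MeasurableSet {ω | ∀ j : Fin m, X j ω = step (ε j)} :=
    fun ε _ => by
      simp only [Set.ofPred_forall]
      exact MeasurableSet.iInter fun j => hmeas j (measurableSet_singleton _)
  rw [measure_congr hEq, measure_biUnion_finset hdisj hmeasCyl,
    sum_congr rfl fun ε _ => measure_cylinder hindep hlaw1 hlaw2 ε, sum_const, nsmul_eq_mul]

lemma toReal_measure_partialSums_le [IsProbabilityMeasure μ] (hmeas : ∀ k, Measurable (X k))
    (hindep : iIndepFun X μ) (hlaw1 : ∀ k, μ {ω | X k ω = -3} = 1 / 2)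
    (hlaw2 : ∀ k, μ {ω | X k ω = 1} = 1 / 2) (n : ℕ) (x : ℤ) :
    (μ {ω | ∀ k ≤ n, ∑ j ∈ range (k + 1), X j ω ≤ x}).toReal =
      #(pathsBelow x (n + 1)) / 2 ^ (n + 1) := by
  rw [measure_eq_card_mul hmeas hindep hlaw1 hlaw2 (pathsBelow x (n + 1))]
  · simp [div_eq_mul_inv]
  intro ω ε hε
  have hsum : ∀ k ≤ n, ∑ j ∈ range (k + 1), X j ω = partialSum ε k := fun k hk =>
    sum_congr rfl fun j hj => by
      rw [stepAt_of_lt ε (by rw [mem_range] at hj; omega)]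
      exact hε ⟨j, _⟩
  simp only [Set.mem_ofPred_eq, mem_pathsBelow, Nat.lt_succ_iff]
  exact forall₂_congr fun k hk => by rw [hsum k hk]

end Probability

end CoinWalk

open CoinWalk

theorem example_initial_values_general {Ω : Type*} [MeasurableSpace Ω] (μ : Measure Ω)
    [IsProbabilityMeasure μ]
    (X : ℕ → Ω → ℤ) (hmeas : ∀ k, Measurable (X k))
    (hindep : iIndepFun X μ)
    (hlaw1 : ∀ k, μ {ω | X k ω = -3} = 1 / 2)
    (hlaw2 : ∀ k, μ {ω | X k ω = 1} = 1 / 2)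
    (α₁ α₂ : ℂ)
    (hroot1 : α₁ ^ 3 - α₁ ^ 2 - α₁ - 1 = 0)
    (hroot2 : α₂ ^ 3 - α₂ ^ 2 - α₂ - 1 = 0)
    (hconj : α₂ = starRingEnd ℂ α₁) (hne : α₁ ≠ α₂)
    (F : ℤ → ℝ)
    (hF : ∀ x : ℤ, Tendsto
      (fun n => (μ {ω | ∀ k ≤ n, ∑ j ∈ Finset.range (k + 1), X j ω ≤ x}).toReal)
      atTop (𝓝 (F x))) :
    (F (-3) : ℂ) = α₁ * α₂ / ((α₁ - 1) * (α₂ - 1)) ∧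
    (F (-2) : ℂ) = -(α₁ + α₂) / ((α₁ - 1) * (α₂ - 1)) ∧
    (F (-1) : ℂ) = 1 / ((α₁ - 1) * (α₂ - 1)) := by
  obtain ⟨b, hsum, hprod, hb3, hb⟩ := exists_tribonacci_constant hroot1 hroot2 hconj hne
  have hF' : ∀ x, -3 ≤ x → x ≤ -1 → F x = (1 - b ^ (-(x + 4))) / 2 := fun x hx hx' =>
    tendsto_nhds_unique (hF x) <| by
      simpa only [toReal_measure_partialSums_le hmeas hindep hlaw1 hlaw2]
        using tendsto_card_pathsBelow_div hx hx' hb3 hb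
  have hb0 : (b : ℂ) ≠ 0 := Complex.ofReal_ne_zero.2 (by positivity)
  have hb3' : (b : ℂ) ^ 3 = b ^ 2 + b + 1 := by exact_mod_cast hb3
  have hden : (α₁ - 1) * (α₂ - 1) = (b ^ 2 + 1) / b := by
    rw [eq_div_iff hb0]
    linear_combination hprod - b * hsum
  have hb2 : (b : ℂ) ^ 2 + 1 ≠ 0 := by exact_mod_cast (by positivity : b ^ 2 + 1 ≠ 0)
  have hprod' : α₁ * α₂ = 1 / b := by rw [eq_div_iff hb0]; exact hprod
  refine ⟨?_, ?_, ?_⟩ <;>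
    rw [hF' _ (by norm_num) (by norm_num), hden] <;>
    push_cast
  · rw [hprod']
    field_simp
    linear_combination hb3'
  · rw [hsum]
    field_simp
    linear_combination (1 - b : ℂ) * hb3'
  · field_simp
    linear_combination (1 + b * (b - 1) : ℂ) * hb3'

/-- Example: for i.i.d. `X_k` with `P(X = -3) = P(X = 1) = 1/2` and `α₁, α₂ = ᾱ₁` the
roots of `s³ - s² - s - 1 = 0` inside the unit disk,
`F_∞(-3) = α₁α₂/((α₁-1)(α₂-1))`, `F_∞(-2) = -(α₁+α₂)/((α₁-1)(α₂-1))`,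
`F_∞(-1) = 1/((α₁-1)(α₂-1))`. -/
theorem example_initial_values {Ω : Type*} [MeasurableSpace Ω] (μ : Measure Ω)
    [IsProbabilityMeasure μ]
    (X : ℕ → Ω → ℤ) (hmeas : ∀ k, Measurable (X k))
    (hindep : iIndepFun X μ)
    (hlaw1 : ∀ k, μ {ω | X k ω = -3} = 1 / 2)
    (hlaw2 : ∀ k, μ {ω | X k ω = 1} = 1 / 2)
    (α₁ α₂ : ℂ)
    (hroot1 : α₁ ^ 3 - α₁ ^ 2 - α₁ - 1 = 0)
    (hroot2 : α₂ ^ 3 - α₂ ^ 2 - α₂ - 1 = 0)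
    (hconj : α₂ = starRingEnd ℂ α₁) (hne : α₁ ≠ α₂)
    (h1 : ‖α₁‖ < 1) (h2 : ‖α₂‖ < 1)
    (F : ℤ → ℝ)
    (hF : ∀ x : ℤ, Tendsto
      (fun n => (μ {ω | ∀ k ≤ n, ∑ j ∈ Finset.range (k + 1), X j ω ≤ x}).toReal)
      atTop (𝓝 (F x))) :
    (F (-3) : ℂ) = α₁ * α₂ / ((α₁ - 1) * (α₂ - 1)) ∧
    (F (-2) : ℂ) = -(α₁ + α₂) / ((α₁ - 1) * (α₂ - 1)) ∧
    (F (-1) : ℂ) = 1 / ((α₁ - 1) * (α₂ - 1)) :=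
  example_initial_values_general μ X hmeas hindep hlaw1 hlaw2 α₁ α₂ hroot1 hroot2 hconj hne F hF
end

section
/- If F : ℤ → [0,1] vanishes for x < M with M > 0 and satisfies F(x) = Σ_{j=M}^{x+D} f(x-j) F(j) for x ≥ M, where f is a probability mass function supported on {-D, -D+1, ...} with f(-D) > 0, then the generating function Ξ̃(s) = Σ_{j≥M} F(j) s^{j-M} satisfies Ξ̃(s)·s^D·(G(s) - 1) = Σ_{j=M}^{M+D-1} F(j) Σ_{x=j}^{M+D-1} f(x-D-j) s^{x-M} for all |s| < 1, s ≠ 0, where G(s) = Σ_{k≥-D} f(k) s^k. -/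
/-!
With `U(s) = ∑ F(M+n) sⁿ` and `V(s) = ∑ f(n-D) sⁿ = s^D G(s)`, the recurrence says exactly
that the `(n+D)`-th Cauchy coefficient of `U V` is `F(M+n)`, i.e. that `U V` and `s^D U` have
the same coefficients from degree `D` on. Hence `U · s^D (G - 1) = U V - s^D U` is the
polynomial formed by the first `D` coefficients of `U V`, which after swapping the two finite
sums is the right-hand side.
-/

open Finset

section PowerSeries

variable {R : Type*}

theorem summable_norm_mul_pow_of_norm_le_s16 [NormedRing R] [NormOneClass R] {u : ℕ → R} {C : ℝ}
    (hu : ∀ n, ‖u n‖ ≤ C) {x : R} (hx : ‖x‖ < 1) : Summable fun n ↦ ‖u n * x ^ n‖ := by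
  refine ((summable_geometric_of_lt_one (norm_nonneg x) hx).mul_left C).of_nonneg_of_le
    (fun n ↦ norm_nonneg _) fun n ↦ ?_
  calc ‖u n * x ^ n‖ ≤ ‖u n‖ * ‖x‖ ^ n :=
        (norm_mul_le _ _).trans (mul_le_mul_of_nonneg_left (norm_pow_le x n) (norm_nonneg _))
    _ ≤ C * ‖x‖ ^ n := by gcongr; exact hu n

theorem tsum_mul_tsum_eq_sum_range_add_tsum_mul [NormedRing R] [CompleteSpace R] {a b : ℕ → R}
    (ha : Summable fun n ↦ ‖a n‖) (hb : Summable fun n ↦ ‖b n‖) (D : ℕ) (z : R)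
    (hab : ∀ n, ∑ k ∈ range (n + D + 1), a k * b (n + D - k) = a n * z) :
    (∑' n, a n) * (∑' n, b n) =
      ∑ n ∈ range D, ∑ k ∈ range (n + 1), a k * b (n - k) + (∑' n, a n) * z := by
  rw [tsum_mul_tsum_eq_tsum_sum_range_of_summable_norm ha hb,
    ← (summable_norm_sum_mul_range_of_summable_norm ha hb).of_norm.sum_add_tsum_nat_add D]
  simp only [hab, ha.of_norm.tsum_mul_right]

theorem Finset.sum_range_mul_pow_mul_mul_pow_sub [CommSemiring R] (u v : ℕ → R) (x : R) (n : ℕ) :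
    ∑ k ∈ range (n + 1), u k * x ^ k * (v (n - k) * x ^ (n - k)) =
      (∑ k ∈ range (n + 1), u k * v (n - k)) * x ^ n := by
  rw [sum_mul]
  refine sum_congr rfl fun k hk ↦ ?_
  rw [← pow_mul_pow_sub x (Nat.lt_succ_iff.mp (mem_range.mp hk))]
  ring

theorem tsum_mul_pow_mul_tsum_mul_pow_of_convolution [NormedCommRing R] [CompleteSpace R]
    {u v : ℕ → R} {x : R} (hu : Summable fun n ↦ ‖u n * x ^ n‖)
    (hv : Summable fun n ↦ ‖v n * x ^ n‖) (D : ℕ)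
    (huv : ∀ n, ∑ k ∈ range (n + D + 1), u k * v (n + D - k) = u n) :
    (∑' n, u n * x ^ n) * (∑' n, v n * x ^ n) =
      ∑ n ∈ range D, (∑ k ∈ range (n + 1), u k * v (n - k)) * x ^ n +
        (∑' n, u n * x ^ n) * x ^ D := by
  rw [tsum_mul_tsum_eq_sum_range_add_tsum_mul hu hv D (x ^ D) fun n ↦ by
    rw [sum_range_mul_pow_mul_mul_pow_sub, huv, pow_add, mul_assoc]]
  simp only [sum_range_mul_pow_mul_mul_pow_sub]

end PowerSeries

theorem Int.sum_Icc_add_eq_sum_Ico {β : Type*} [AddCommMonoid β] (g : ℤ → β) (a : ℤ) (m n : ℕ) :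
    ∑ x ∈ Icc (a + m) (a + n - 1), g x = ∑ i ∈ Ico m n, g (a + i) := by
  refine sum_nbij' (fun x ↦ (x - a).toNat) (fun i ↦ a + i) ?_ ?_ ?_ ?_ ?_ <;>
    intro _ h <;> simp only [mem_Icc, mem_Ico] at h ⊢ <;> try omega
  congr 1; omega

theorem sum_range_mul_eq_of_recurrence {D : ℕ} {M : ℤ} {f F : ℤ → ℝ}
    (hFrec : ∀ x : ℤ, M ≤ x → F x = ∑ j ∈ Icc M (x + D), f (x - j) * F j) (n : ℕ) :
    ∑ k ∈ range (n + D + 1), F (M + k) * f ((n + D - k : ℕ) - D) = F (M + n) := by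
  have hIcc : Icc M (M + n + D) = Icc (M + (0 : ℕ)) (M + (n + D + 1 : ℕ) - 1) := by
    push_cast; ring_nf
  rw [hFrec _ (by omega), hIcc, Int.sum_Icc_add_eq_sum_Ico, ← range_eq_Ico]
  refine sum_congr rfl fun k hk ↦ ?_
  have hk : k ≤ n + D := Nat.lt_succ_iff.mp (mem_range.mp hk)
  rw [mul_comm]
  congr 2
  push_cast [hk]
  ring

theorem sum_range_sum_range_mul_pow_eq_sum_Icc {𝕜 : Type*} [Field 𝕜] (D : ℕ) (M : ℤ)
    (g h : ℤ → 𝕜) (s : 𝕜) :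
    ∑ n ∈ range D, (∑ k ∈ range (n + 1), g (M + k) * h ((n - k : ℕ) - D)) * s ^ n =
      ∑ j ∈ Icc M (M + D - 1), g j * ∑ x ∈ Icc j (M + D - 1), h (x - D - j) * s ^ (x - M) := by
  have hM : Icc M (M + D - 1) = Icc (M + (0 : ℕ)) (M + D - 1) := by rw [Nat.cast_zero, add_zero]
  rw [hM, Int.sum_Icc_add_eq_sum_Ico, range_eq_Ico]
  simp only [sum_mul, range_eq_Ico]
  rw [← sum_Ico_Ico_comm]
  refine sum_congr rfl fun k _ ↦ ?_
  rw [Int.sum_Icc_add_eq_sum_Ico, mul_sum]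
  refine sum_congr rfl fun n hn ↦ ?_
  have hkn : k ≤ n := (mem_Ico.mp hn).1
  rw [add_sub_cancel_left, zpow_natCast, mul_assoc]
  congr 3
  push_cast [hkn]
  ring

theorem generating_function_identity_M_pos_general (D : ℕ)
    (M : ℤ)
    (f : ℤ → ℝ) (hf0 : ∀ j, 0 ≤ f j) (hf1 : ∀ j, f j ≤ 1)
    (F : ℤ → ℝ) (hF01 : ∀ x, 0 ≤ F x ∧ F x ≤ 1)
    (hFrec : ∀ x : ℤ, M ≤ x →
      F x = ∑ j ∈ Finset.Icc M (x + D), f (x - j) * F j) :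
    ∀ s : ℂ, ‖s‖ < 1 → s ≠ 0 →
      (∑' j : ℕ, (F (M + j) : ℂ) * s ^ j) * s ^ D *
          ((∑' k : ℕ, (f ((k : ℤ) - D) : ℂ) * s ^ ((k : ℤ) - D)) - 1) =
        ∑ j ∈ Finset.Icc M (M + D - 1), (F j : ℂ) *
          ∑ x ∈ Finset.Icc j (M + D - 1), (f (x - D - j) : ℂ) * s ^ (x - M) := by
  intro s hs hs0
  have hunit : ∀ r : ℝ, 0 ≤ r → r ≤ 1 → ‖(r : ℂ)‖ ≤ 1 := fun r h0 h1 ↦ by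
    rwa [Complex.norm_real, Real.norm_of_nonneg h0]
  have hFs : Summable fun n : ℕ ↦ ‖(F (M + n) : ℂ) * s ^ n‖ :=
    summable_norm_mul_pow_of_norm_le_s16 (fun n ↦ hunit _ (hF01 _).1 (hF01 _).2) hs
  have hfs : Summable fun n : ℕ ↦ ‖(f ((n : ℤ) - D) : ℂ) * s ^ n‖ :=
    summable_norm_mul_pow_of_norm_le_s16 (fun n ↦ hunit _ (hf0 _) (hf1 _)) hs
  have hG : ∑' k : ℕ, (f ((k : ℤ) - D) : ℂ) * s ^ ((k : ℤ) - D) =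
      (∑' k : ℕ, (f ((k : ℤ) - D) : ℂ) * s ^ k) / s ^ D := by
    rw [← tsum_div_const]
    congr 1 with k
    rw [zpow_sub₀ hs0, zpow_natCast, zpow_natCast, mul_div_assoc]
  have hconv := tsum_mul_pow_mul_tsum_mul_pow_of_convolution hFs hfs D fun n ↦ by
    exact_mod_cast sum_range_mul_eq_of_recurrence hFrec n
  rw [hG, ← sum_range_sum_range_mul_pow_eq_sum_Icc D M (fun j ↦ (F j : ℂ)) (fun j ↦ (f j : ℂ)),
    ← sub_eq_of_eq_add hconv]
  field_simp

/-- Generating-function identity (case `M > 0`): if `F` vanishes below `M > 0` and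
satisfies `F(x) = ∑_{j=M}^{x+D} f(x-j) F(j)` for `x ≥ M`, with `f` a pmf supported on
`{-D, -D+1, …}` and `f(-D) > 0`, then for `|s| < 1`, `s ≠ 0`,
`Ξ̃(s)·s^D·(G(s) - 1) = ∑_{j=M}^{M+D-1} F(j) ∑_{x=j}^{M+D-1} f(x-D-j) s^{x-M}`,
where `Ξ̃(s) = ∑_{j≥M} F(j) s^{j-M}` and `G(s) = ∑_{k≥-D} f(k) s^k`. -/
theorem generating_function_identity_M_pos (D : ℕ) (hD : 1 ≤ D)
    (M : ℤ) (hM : 0 < M)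
    (f : ℤ → ℝ) (hf0 : ∀ j, 0 ≤ f j) (hf1 : ∀ j, f j ≤ 1)
    (hfsupp : ∀ j : ℤ, j < -(D : ℤ) → f j = 0)
    (hfD : 0 < f (-(D : ℤ)))
    (hfsum : HasSum (fun k : ℕ => f ((k : ℤ) - D)) 1)
    (F : ℤ → ℝ) (hF01 : ∀ x, 0 ≤ F x ∧ F x ≤ 1)
    (hFzero : ∀ x : ℤ, x < M → F x = 0)
    (hFrec : ∀ x : ℤ, M ≤ x →
      F x = ∑ j ∈ Finset.Icc M (x + D), f (x - j) * F j) :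
    ∀ s : ℂ, ‖s‖ < 1 → s ≠ 0 →
      (∑' j : ℕ, (F (M + j) : ℂ) * s ^ j) * s ^ D *
          ((∑' k : ℕ, (f ((k : ℤ) - D) : ℂ) * s ^ ((k : ℤ) - D)) - 1) =
        ∑ j ∈ Finset.Icc M (M + D - 1), (F j : ℂ) *
          ∑ x ∈ Finset.Icc j (M + D - 1), (f (x - D - j) : ℂ) * s ^ (x - M) :=
  generating_function_identity_M_pos_general D M f hf0 hf1 F hF01 hFrec
end
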